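/- A bicomplex matrix A ∈ BC^{n×n} is hyperbolic positive if and only if A = B^{*t}·B for some bicomplex matrix B ∈ BC^{m×n}, if and only if A = C² for some hyperbolic positive matrix C. -/

import Mathlib

@[ext] structure BC where
  z1 : ℂ
  z2 : ℂ

namespace BC

instance : Zero BC := ⟨⟨0, 0⟩⟩
instance : One BC := ⟨⟨1, 0⟩⟩
instance : Add BC := ⟨fun Z W => ⟨Z.z1 + W.z1, Z.z2 + W.z2⟩⟩
instance : Neg BC := ⟨fun Z => ⟨-Z.z1, -Z.z2⟩⟩
instance : Mul BC := ⟨fun Z W => ⟨Z.z1 * W.z1 - Z.z2 * W.z2, Z.z1 * W.z2 + Z.z2 * W.z1⟩⟩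

@[simp] lemma zero_z1 : (0 : BC).z1 = 0 := rfl
@[simp] lemma zero_z2 : (0 : BC).z2 = 0 := rfl
@[simp] lemma one_z1 : (1 : BC).z1 = 1 := rfl
@[simp] lemma one_z2 : (1 : BC).z2 = 0 := rfl
@[simp] lemma add_z1 (Z W : BC) : (Z + W).z1 = Z.z1 + W.z1 := rfl
@[simp] lemma add_z2 (Z W : BC) : (Z + W).z2 = Z.z2 + W.z2 := rfl
@[simp] lemma neg_z1 (Z : BC) : (-Z).z1 = -Z.z1 := rfl
@[simp] lemma neg_z2 (Z : BC) : (-Z).z2 = -Z.z2 := rfl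
@[simp] lemma mul_z1 (Z W : BC) : (Z * W).z1 = Z.z1 * W.z1 - Z.z2 * W.z2 := rfl
@[simp] lemma mul_z2 (Z W : BC) : (Z * W).z2 = Z.z1 * W.z2 + Z.z2 * W.z1 := rfl

instance : CommRing BC where
  add_assoc a b c := by ext <;> simp <;> ring
  zero_add a := by ext <;> simp
  add_zero a := by ext <;> simp
  add_comm a b := by ext <;> simp <;> ring
  neg_add_cancel a := by ext <;> simp
  mul_assoc a b c := by ext <;> simp <;> ring
  one_mul a := by ext <;> simp
  mul_one a := by ext <;> simp
  left_distrib a b c := by ext <;> simp <;> ring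
  right_distrib a b c := by ext <;> simp <;> ring
  mul_comm a b := by ext <;> simp <;> ring
  zero_mul a := by ext <;> simp
  mul_zero a := by ext <;> simp
  nsmul := nsmulRec
  zsmul := zsmulRec

/-- Euclidean norm of a bicomplex number. -/
noncomputable def enorm (Z : BC) : ℝ :=
  Real.sqrt (‖Z.z1‖ ^ 2 + ‖Z.z2‖ ^ 2)

/-- Embedding of ℂ(𝐢) into BC. -/
def ofC (z : ℂ) : BC := ⟨z, 0⟩

/-- Embedding of ℝ into BC. -/
noncomputable def ofR (r : ℝ) : BC := ⟨(r : ℂ), 0⟩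

/-- The idempotent 𝐞 = (1 + 𝐢𝐣)/2. -/
noncomputable def e : BC := ⟨1 / 2, Complex.I / 2⟩

/-- The idempotent 𝐞† = (1 - 𝐢𝐣)/2. -/
noncomputable def edag : BC := ⟨1 / 2, -(Complex.I / 2)⟩

/-- First idempotent component β₁ = z₁ - 𝐢 z₂. -/
def beta1 (Z : BC) : ℂ := Z.z1 - Complex.I * Z.z2

/-- Second idempotent component β₂ = z₁ + 𝐢 z₂. -/
def beta2 (Z : BC) : ℂ := Z.z1 + Complex.I * Z.z2

/-- The †-conjugation. -/
def dag (Z : BC) : BC := ⟨Z.z1, -Z.z2⟩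

/-- The *-conjugation. -/
def bstar (Z : BC) : BC := ⟨(starRingEnd ℂ) Z.z1, -((starRingEnd ℂ) Z.z2)⟩

/-- The set 𝔻⁺ of positive hyperbolic numbers. -/
def Dpos : Set BC :=
  {Z | ∃ ν μ : ℝ, 0 ≤ ν ∧ 0 ≤ μ ∧ Z = ofR ν * e + ofR μ * edag}

/-- Partial order induced by 𝔻⁺. -/
def hle (Z W : BC) : Prop := W - Z ∈ Dpos

/-- Hyperbolic-valued norm |Z|ₖ = |β₁|𝐞 + |β₂|𝐞†. -/
noncomputable def hnorm (Z : BC) : BC :=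
  ofR ‖beta1 Z‖ * e + ofR ‖beta2 Z‖ * edag

/-- Z is a hyperbolic number: Z = x₁ + y₂ 𝐢𝐣. -/
def isHyp (Z : BC) : Prop := Z.z1.im = 0 ∧ Z.z2.re = 0


/-- Bicomplex matrix from its idempotent components. -/
noncomputable def idemMat {n : ℕ} (A1 A2 : Matrix (Fin n) (Fin n) ℂ) :
    Matrix (Fin n) (Fin n) BC :=
  fun i j => ofC (A1 i j) * e + ofC (A2 i j) * edag

/-- The *-conjugate transpose of a bicomplex matrix. -/
def cstar {m n : ℕ} (A : Matrix (Fin m) (Fin n) BC) : Matrix (Fin n) (Fin m) BC :=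
  fun i j => bstar (A j i)

/-- The quadratic form c^{*t} · A · c. -/
def quadForm {n : ℕ} (A : Matrix (Fin n) (Fin n) BC) (c : Fin n → BC) : BC :=
  ∑ i, ∑ j, bstar (c i) * A i j * c j

/-- A is hyperbolic positive: *-self-adjoint with c^{*t}Ac ∈ 𝔻⁺ for all columns c. -/
def HypPos {n : ℕ} (A : Matrix (Fin n) (Fin n) BC) : Prop :=
  cstar A = A ∧ ∀ c : Fin n → BC, quadForm A c ∈ Dpos

/-!
The idempotent components `β₁, β₂ : BC → ℂ` form a ring isomorphism `BC ≃ ℂ × ℂ` which turns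
`*`-conjugation into complex conjugation on each component and `𝔻⁺` into `ℝ≥0 × ℝ≥0`. Hence a
bicomplex matrix is hyperbolic positive exactly when both of its component matrices are positive
semidefinite, and both factorizations are assembled componentwise from the complex ones: `Bᴴ B`
and the positive square root.
-/

open Matrix
open scoped ComplexOrder MatrixOrder

def beta1Hom : BC →+* ℂ where
  toFun := beta1
  map_one' := by simp [beta1]
  map_mul' Z W := by
    simp only [beta1, mul_z1, mul_z2]
    linear_combination (-(Z.z2 * W.z2)) * Complex.I_sq
  map_zero' := by simp [beta1]
  map_add' Z W := by simp only [beta1, add_z1, add_z2]; ring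

def beta2Hom : BC →+* ℂ where
  toFun := beta2
  map_one' := by simp [beta2]
  map_mul' Z W := by
    simp only [beta2, mul_z1, mul_z2]
    linear_combination (-(Z.z2 * W.z2)) * Complex.I_sq
  map_zero' := by simp [beta2]
  map_add' Z W := by simp only [beta2, add_z1, add_z2]; ring

lemma beta1Hom_apply (Z : BC) : beta1Hom Z = beta1 Z := rfl
lemma beta2Hom_apply (Z : BC) : beta2Hom Z = beta2 Z := rfl

lemma ext_beta {Z W : BC} (h1 : beta1 Z = beta1 W) (h2 : beta2 Z = beta2 W) : Z = W := by
  simp only [beta1, beta2] at h1 h2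
  have h3 : Complex.I * Z.z2 = Complex.I * W.z2 := by linear_combination (h2 - h1) / 2
  ext
  · linear_combination (h1 + h2) / 2
  · exact mul_left_cancel₀ Complex.I_ne_zero h3

lemma beta1_idem (a b : ℂ) : beta1 (ofC a * e + ofC b * edag) = a := by
  simp only [beta1, add_z1, add_z2, mul_z1, mul_z2, ofC, e, edag]
  linear_combination (b / 2 - a / 2) * Complex.I_sq

lemma beta2_idem (a b : ℂ) : beta2 (ofC a * e + ofC b * edag) = b := by
  simp only [beta2, add_z1, add_z2, mul_z1, mul_z2, ofC, e, edag]
  linear_combination (a / 2 - b / 2) * Complex.I_sq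

lemma beta1Hom_ofC (z : ℂ) : beta1Hom (ofC z) = z := by simp [beta1Hom_apply, beta1, ofC]
lemma beta2Hom_ofC (z : ℂ) : beta2Hom (ofC z) = z := by simp [beta2Hom_apply, beta2, ofC]

lemma beta1Hom_bstar (Z : BC) : beta1Hom (bstar Z) = star (beta1Hom Z) := by
  simp only [beta1Hom_apply, beta1, bstar, Complex.star_def, map_sub, map_mul, Complex.conj_I]
  ring

lemma beta2Hom_bstar (Z : BC) : beta2Hom (bstar Z) = star (beta2Hom Z) := by
  simp only [beta2Hom_apply, beta2, bstar, Complex.star_def, map_add, map_mul, Complex.conj_I]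
  ring

lemma mem_Dpos_iff {Z : BC} : Z ∈ Dpos ↔ 0 ≤ beta1Hom Z ∧ 0 ≤ beta2Hom Z := by
  simp only [beta1Hom_apply, beta2Hom_apply]
  constructor
  · rintro ⟨ν, μ, hν, hμ, rfl⟩
    rw [ofR, ofR, ← ofC, ← ofC, beta1_idem, beta2_idem]
    exact ⟨by exact_mod_cast hν, by exact_mod_cast hμ⟩
  · rintro ⟨h1, h2⟩
    refine ⟨(beta1 Z).re, (beta2 Z).re, (Complex.nonneg_iff.mp h1).1,
      (Complex.nonneg_iff.mp h2).1, ext_beta ?_ ?_⟩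
    · rw [ofR, ofR, ← ofC, ← ofC, beta1_idem]
      exact Complex.eq_re_of_ofReal_le (r := 0) (by simpa using h1)
    · rw [ofR, ofR, ← ofC, ← ofC, beta2_idem]
      exact Complex.eq_re_of_ofReal_le (r := 0) (by simpa using h2)

section Matrix

variable {m n : ℕ}

lemma Matrix.ext_beta {A B : Matrix (Fin m) (Fin n) BC}
    (h1 : A.map beta1Hom = B.map beta1Hom) (h2 : A.map beta2Hom = B.map beta2Hom) : A = B :=
  Matrix.ext fun i j => BC.ext_beta (congrFun₂ h1 i j) (congrFun₂ h2 i j)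

lemma map_cstar (f : BC →+* ℂ) (hf : ∀ Z, f (bstar Z) = star (f Z))
    (B : Matrix (Fin m) (Fin n) BC) : (cstar B).map f = (B.map f)ᴴ := by
  ext i j
  simp [cstar, hf]

lemma map_quadForm (f : BC →+* ℂ) (hf : ∀ Z, f (bstar Z) = star (f Z))
    (A : Matrix (Fin n) (Fin n) BC) (c : Fin n → BC) :
    f (quadForm A c) = star (f ∘ c) ⬝ᵥ (A.map f *ᵥ (f ∘ c)) := by
  simp only [quadForm, map_sum, map_mul, hf, dotProduct, mulVec, map_apply, Pi.star_apply,
    Function.comp_apply, Finset.mul_sum, mul_assoc]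

lemma map_beta1_idemMat (A1 A2 : Matrix (Fin n) (Fin n) ℂ) : (idemMat A1 A2).map beta1Hom = A1 :=
  Matrix.ext fun _ _ => beta1_idem _ _

lemma map_beta2_idemMat (A1 A2 : Matrix (Fin n) (Fin n) ℂ) : (idemMat A1 A2).map beta2Hom = A2 :=
  Matrix.ext fun _ _ => beta2_idem _ _

lemma cstar_eq_self_iff {A : Matrix (Fin n) (Fin n) BC} :
    cstar A = A ↔ (A.map beta1Hom).IsHermitian ∧ (A.map beta2Hom).IsHermitian := by
  rw [IsHermitian, IsHermitian, ← map_cstar _ beta1Hom_bstar, ← map_cstar _ beta2Hom_bstar]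
  refine ⟨fun h => by rw [h]; exact ⟨rfl, rfl⟩, fun ⟨h1, h2⟩ => Matrix.ext_beta h1 h2⟩

lemma hypPos_iff_posSemidef {A : Matrix (Fin n) (Fin n) BC} :
    HypPos A ↔ (A.map beta1Hom).PosSemidef ∧ (A.map beta2Hom).PosSemidef := by
  simp only [HypPos, posSemidef_iff_dotProduct_mulVec, cstar_eq_self_iff, mem_Dpos_iff,
    map_quadForm _ beta1Hom_bstar, map_quadForm _ beta2Hom_bstar]
  constructor
  · rintro ⟨⟨h1, h2⟩, hq⟩
    exact ⟨⟨h1, fun x => by simpa [Function.comp_def, beta1Hom_ofC] using (hq (ofC ∘ x)).1⟩,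
      ⟨h2, fun x => by simpa [Function.comp_def, beta2Hom_ofC] using (hq (ofC ∘ x)).2⟩⟩
  · rintro ⟨⟨h1, hq1⟩, ⟨h2, hq2⟩⟩
    exact ⟨⟨h1, h2⟩, fun c => ⟨hq1 _, hq2 _⟩⟩

lemma hypPos_cstar_mul_self (B : Matrix (Fin m) (Fin n) BC) : HypPos (cstar B * B) := by
  rw [hypPos_iff_posSemidef, Matrix.map_mul, Matrix.map_mul, map_cstar _ beta1Hom_bstar,
    map_cstar _ beta2Hom_bstar]
  exact ⟨posSemidef_conjTranspose_mul_self _, posSemidef_conjTranspose_mul_self _⟩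

lemma HypPos.exists_sq_eq {A : Matrix (Fin n) (Fin n) BC} (hA : HypPos A) :
    ∃ C, HypPos C ∧ A = C * C := by
  obtain ⟨h1, h2⟩ := hypPos_iff_posSemidef.mp hA
  refine ⟨idemMat (CFC.sqrt (A.map beta1Hom)) (CFC.sqrt (A.map beta2Hom)), ?_, ?_⟩
  · rw [hypPos_iff_posSemidef, map_beta1_idemMat, map_beta2_idemMat]
    exact ⟨(CFC.sqrt_nonneg _).posSemidef, (CFC.sqrt_nonneg _).posSemidef⟩
  · refine Matrix.ext_beta ?_ ?_
    · rw [Matrix.map_mul, map_beta1_idemMat, CFC.sqrt_mul_sqrt_self _ h1.nonneg]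
    · rw [Matrix.map_mul, map_beta2_idemMat, CFC.sqrt_mul_sqrt_self _ h2.nonneg]

end Matrix

theorem hyperbolic_positive_iff_factorization (n : ℕ)
    (A : Matrix (Fin n) (Fin n) BC) :
    (HypPos A ↔ ∃ (m : ℕ) (B : Matrix (Fin m) (Fin n) BC), A = cstar B * B) ∧
    (HypPos A ↔ ∃ C : Matrix (Fin n) (Fin n) BC, HypPos C ∧ A = C * C) := by
  have sq_eq_cstar_mul_self {C : Matrix (Fin n) (Fin n) BC} (hC : HypPos C) :
      C * C = cstar C * C := by rw [hC.1]
  refine ⟨⟨fun hA => ?_, ?_⟩, ⟨HypPos.exists_sq_eq, ?_⟩⟩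
  · obtain ⟨C, hC, rfl⟩ := hA.exists_sq_eq
    exact ⟨n, C, sq_eq_cstar_mul_self hC⟩
  · rintro ⟨m, B, rfl⟩
    exact hypPos_cstar_mul_self B
  · rintro ⟨C, hC, rfl⟩
    exact sq_eq_cstar_mul_self hC ▸ hypPos_cstar_mul_self C

end BC
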